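/- arXiv:2412.07510 — 2 statements merged into one kernel-verified Lean document; each statement's English description precedes it below -/
import Mathlib

section
/- Let R₁ be a nontrivial commutative ring with identity having at most one nonzero zero-divisor (so Γ(R₁) has diameter 0), and let R₂ be a finite commutative local ring with identity whose maximal ideal is principal, generated by an element x with x² ≠ 0 (so Γ(R₂) has diameter 2). Then γ_R(Γ(R₁ × R₂)) = 4. -/
/-- The set of nonzero zero-divisors of a commutative ring `R`. -/
def zdvSet (R : Type*) [CommRing R] : Set R :=
  {x | x ≠ 0 ∧ ∃ y, y ≠ 0 ∧ x * y = 0}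

/-- The zero-divisor graph `Γ(R)`: vertices are the nonzero zero-divisors of `R`,
with distinct `x`, `y` adjacent iff `x * y = 0`. -/
def zeroDivisorGraph (R : Type*) [CommRing R] : SimpleGraph (zdvSet R) where
  Adj a b := a ≠ b ∧ (a : R) * (b : R) = 0
  symm := by
    constructor
    rintro a b ⟨hne, hmul⟩
    exact ⟨hne.symm, by rwa [mul_comm]⟩
  loopless := by constructor; rintro a ⟨hne, _⟩; exact hne rfl

/-- A Roman dominating function: every vertex with value `0` has a neighbour
with value `2`. -/
def IsRomanDominating {V : Type*} (G : SimpleGraph V) (f : V → Fin 3) : Prop :=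
  ∀ u, f u = 0 → ∃ v, G.Adj u v ∧ f v = 2

/-- The Roman domination number: the minimum weight of a (finitely supported)
Roman dominating function. -/
noncomputable def romanDominationNumber {V : Type*} (G : SimpleGraph V) : ℕ :=
  sInf {w | ∃ f : V → Fin 3, IsRomanDominating G f ∧
    {v | f v ≠ 0}.Finite ∧ w = ∑ᶠ v, (f v : ℕ)}

/-!
Write `Γ = Γ(R₁ × R₂)` and `𝔪 = (x)`. Some `z ≠ 0` kills every zero-divisor of `R₁` (the unique
nonzero zero-divisor if there is one, else `1`), and since `R₂` is artinian local some `t ≠ 0`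
kills `𝔪`. Every vertex `(a, b)` is then adjacent to `(z, 0)` if `b` is a unit and to `(0, t)`
otherwise, so `γ_R(Γ) ≤ 4`. Conversely every vertex has two non-neighbours (among `(1, x)`,
`(1, t)`, `(0, x)`, `(0, t)`, `(0, 1)`, `(0, 1 - x)`; here `x² ≠ 0` gives `x ≠ t`), which forces
weight `≥ 4` whether a Roman dominating function uses the label `2` twice, once, or never.
-/

lemma Finset.sum_le_finsum_of_support_finite {ι : Type*} {g : ι → ℕ}
    (hg : (Function.support g).Finite) (s : Finset ι) : ∑ i ∈ s, g i ≤ ∑ᶠ i, g i := by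
  classical
  rw [finsum_eq_sum_of_support_subset g (s := s ∪ hg.toFinset) (by simp)]
  exact Finset.sum_le_sum_of_subset Finset.subset_union_left

section RomanDomination

variable {V : Type*} {G : SimpleGraph V}

lemma exists_isRomanDominating_finsum_eq_two_mul_card (D : Finset V)
    (hD : ∀ v ∉ D, ∃ d ∈ D, G.Adj v d) :
    ∃ f : V → Fin 3, IsRomanDominating G f ∧ {v | f v ≠ 0}.Finite ∧
      2 * D.card = ∑ᶠ v, (f v : ℕ) := by
  classical
  refine ⟨fun v => if v ∈ D then 2 else 0, fun v hv => ?_, D.finite_toSet.subset ?_, ?_⟩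
  · have hvD : v ∉ D := fun h => by simp [h] at hv
    obtain ⟨d, hd, hvd⟩ := hD v hvD
    exact ⟨d, hvd, by simp [hd]⟩
  · intro v hv
    by_contra h
    simp [h] at hv
  · rw [finsum_eq_sum_of_support_subset _ (s := D) (by intro v; simp +contextual),
      Finset.sum_congr rfl (g := fun _ => 2) fun v hv => by simp [hv]]
    simp [mul_comm]

lemma IsRomanDominating.four_le_finsum {f : V → Fin 3} (hf : IsRomanDominating G f)
    (hfin : {v | f v ≠ 0}.Finite) (hedge : ∃ v w, G.Adj v w)
    (hnon : ∀ v, ∃ u₁ u₂, u₁ ≠ u₂ ∧ u₁ ≠ v ∧ u₂ ≠ v ∧ ¬G.Adj v u₁ ∧ ¬G.Adj v u₂) :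
    4 ≤ ∑ᶠ v, (f v : ℕ) := by
  classical
  have hsum (s : Finset V) : ∑ v ∈ s, (f v : ℕ) ≤ ∑ᶠ v, (f v : ℕ) :=
    Finset.sum_le_finsum_of_support_finite (hfin.subset fun v hv h => hv (by simp [h])) s
  by_cases htwo : ∃ v₀, f v₀ = 2
  · obtain ⟨v₀, hv₀⟩ := htwo
    by_cases hother : ∃ v₁, v₁ ≠ v₀ ∧ f v₁ = 2
    · obtain ⟨v₁, hne, hv₁⟩ := hother
      refine le_trans ?_ (hsum {v₁, v₀})
      rw [Finset.sum_pair hne, hv₀, hv₁]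
      rfl
    · obtain ⟨u₁, u₂, hu, hu₁, hu₂, hn₁, hn₂⟩ := hnon v₀
      have hpos (u) (hu : u ≠ v₀) (hnu : ¬G.Adj v₀ u) : f u ≠ 0 := by
        intro h0
        obtain ⟨v, huv, hv⟩ := hf u h0
        obtain rfl : v = v₀ := by_contra fun h => hother ⟨v, h, hv⟩
        exact hnu huv.symm
      have := hpos u₁ hu₁ hn₁
      have := hpos u₂ hu₂ hn₂
      refine le_trans ?_ (hsum {v₀, u₁, u₂})
      rw [Finset.sum_insert (by simp [hu₁.symm, hu₂.symm]), Finset.sum_pair hu]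
      omega
  · have hpos (v) : f v ≠ 0 := fun h0 => by
      obtain ⟨w, -, hw⟩ := hf v h0
      exact htwo ⟨w, hw⟩
    obtain ⟨v, w, hvw⟩ := hedge
    obtain ⟨u₁, u₂, hu, hu₁, hu₂, hn₁, hn₂⟩ := hnon v
    have hw₁ : w ≠ u₁ := by rintro rfl; exact hn₁ hvw
    have hw₂ : w ≠ u₂ := by rintro rfl; exact hn₂ hvw
    have := hpos v
    have := hpos w
    have := hpos u₁
    have := hpos u₂
    refine le_trans ?_ (hsum {v, w, u₁, u₂})
    rw [Finset.sum_insert (by simp [hvw.ne, hu₁.symm, hu₂.symm]),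
      Finset.sum_insert (by simp [hw₁, hw₂]), Finset.sum_pair hu]
    omega

end RomanDomination

lemma zeroDivisorGraph_adj {R : Type*} [CommRing R] {u v : zdvSet R} :
    (zeroDivisorGraph R).Adj u v ↔ u ≠ v ∧ (u : R) * v = 0 :=
  Iff.rfl

lemma exists_ne_zero_mul_eq_zero_of_zdvSet_subsingleton {R : Type*} [CommRing R] [Nontrivial R]
    (h : (zdvSet R).Subsingleton) : ∃ z : R, z ≠ 0 ∧ ∀ a ∈ zdvSet R, a * z = 0 := by
  rcases h.eq_empty_or_singleton with h | ⟨w, hw⟩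
  · exact ⟨1, one_ne_zero, by simp [h]⟩
  · have hwmem : w ∈ zdvSet R := hw ▸ rfl
    obtain ⟨hw0, y, hy0, hwy⟩ := id hwmem
    obtain rfl : y = w := h ⟨hy0, w, hw0, by rw [mul_comm, hwy]⟩ hwmem
    exact ⟨y, hy0, fun a ha => by rw [hw] at ha; rw [ha, hwy]⟩

lemma IsLocalRing.exists_ne_zero_mul_eq_zero_of_mem_maximalIdeal (R : Type*) [CommRing R]
    [IsLocalRing R] [IsArtinianRing R] :
    ∃ t : R, t ≠ 0 ∧ ∀ b ∈ maximalIdeal R, b * t = 0 := by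
  -- `𝔪` is the only prime, so it is an associated prime: the annihilator of some `t`
  obtain ⟨P, hP⟩ := associatedPrimes.nonempty R R
  obtain ⟨hPprime, t, hPt⟩ := isAssociatedPrime_iff.mp hP
  have hPm : P = maximalIdeal R := eq_maximalIdeal (IsArtinianRing.isMaximal_of_isPrime P)
  refine ⟨t, fun ht => ?_, fun b hb => ?_⟩
  · exact hPprime.ne_top (by simp [hPt, ht])
  · have : b ∈ (⊥ : Submodule R R).colon {t} := hPt ▸ hPm ▸ hb
    simpa [Submodule.mem_colon_singleton] using this

section Prod

variable {R₁ R₂ : Type*} [CommRing R₁] [CommRing R₂]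

lemma zero_mk_mem_zdvSet_prod [Nontrivial R₁] {b : R₂} (hb : b ≠ 0) :
    ((0, b) : R₁ × R₂) ∈ zdvSet (R₁ × R₂) :=
  ⟨by simp [hb], (1, 0), by simp, by simp⟩

lemma mk_zero_mem_zdvSet_prod [Nontrivial R₂] {a : R₁} (ha : a ≠ 0) :
    ((a, 0) : R₁ × R₂) ∈ zdvSet (R₁ × R₂) :=
  ⟨by simp [ha], (0, 1), by simp, by simp⟩

lemma mk_mem_zdvSet_prod_of_mul_eq_zero {a : R₁} {b d : R₂} (ha : a ≠ 0) (hd : d ≠ 0)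
    (hbd : b * d = 0) : ((a, b) : R₁ × R₂) ∈ zdvSet (R₁ × R₂) :=
  ⟨by simp [ha], (0, d), by simp [hd], by simp [hbd]⟩

lemma fst_mem_zdvSet_of_isUnit_snd {p : R₁ × R₂} (hp : p ∈ zdvSet (R₁ × R₂)) (hunit : IsUnit p.2)
    (h0 : p.1 ≠ 0) : p.1 ∈ zdvSet R₁ := by
  obtain ⟨-, q, hq, hpq⟩ := hp
  have hq₂ : q.2 = 0 := (hunit.mul_right_eq_zero).mp congr(($hpq).2)
  refine ⟨h0, q.1, fun hq₁ => hq (Prod.ext hq₁ hq₂), congr(($hpq).1)⟩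

variable [IsLocalRing R₂]

lemma exists_dominating_pair_zeroDivisorGraph_prod {z : R₁} {t : R₂} (hz0 : z ≠ 0)
    (hz : ∀ a ∈ zdvSet R₁, a * z = 0) (ht0 : t ≠ 0)
    (ht : ∀ b ∈ IsLocalRing.maximalIdeal R₂, b * t = 0) :
    ∃ D : Finset (zdvSet (R₁ × R₂)), D.card = 2 ∧
      ∀ v ∉ D, ∃ d ∈ D, (zeroDivisorGraph (R₁ × R₂)).Adj v d := by
  classical
  have : Nontrivial R₁ := ⟨⟨z, 0, hz0⟩⟩
  let p : zdvSet (R₁ × R₂) := ⟨(z, 0), mk_zero_mem_zdvSet_prod hz0⟩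
  let q : zdvSet (R₁ × R₂) := ⟨(0, t), zero_mk_mem_zdvSet_prod ht0⟩
  refine ⟨{p, q}, Finset.card_pair (by simp [p, q, hz0]), ?_⟩
  rintro ⟨⟨a, b⟩, hv⟩ hvD
  simp only [Finset.mem_insert, Finset.mem_singleton, not_or] at hvD
  by_cases hb : IsUnit b
  · refine ⟨p, by simp, zeroDivisorGraph_adj.mpr ⟨hvD.1, ?_⟩⟩
    have haz : a * z = 0 := by
      by_cases ha : a = 0
      · simp [ha]
      · exact hz a (fst_mem_zdvSet_of_isUnit_snd hv hb ha)
    simp [p, haz]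
  · refine ⟨q, by simp, zeroDivisorGraph_adj.mpr ⟨hvD.2, ?_⟩⟩
    simp [q, ht b ((IsLocalRing.mem_maximalIdeal b).mpr hb)]

lemma zeroDivisorGraph_prod_exists_two_not_adj [Nontrivial R₁] {x t : R₂}
    (hx : x ∈ IsLocalRing.maximalIdeal R₂) (hx2 : x ^ 2 ≠ 0) (ht0 : t ≠ 0)
    (ht : ∀ b ∈ IsLocalRing.maximalIdeal R₂, b * t = 0) (v : zdvSet (R₁ × R₂)) :
    ∃ u₁ u₂, u₁ ≠ u₂ ∧ u₁ ≠ v ∧ u₂ ≠ v ∧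
      ¬(zeroDivisorGraph (R₁ × R₂)).Adj v u₁ ∧ ¬(zeroDivisorGraph (R₁ × R₂)).Adj v u₂ := by
  have hxt : x * t = 0 := ht x hx
  have hx0 : x ≠ 0 := by rintro rfl; simp at hx2
  have hxne : x ≠ t := by rintro rfl; exact hx2 (by rw [sq, hxt])
  have hxu : ¬IsUnit x := (IsLocalRing.mem_maximalIdeal x).mp hx
  have htu : ¬IsUnit t := fun h => hx0 (h.mul_left_eq_zero.mp hxt)
  have h1x : IsUnit (1 - x) := IsLocalRing.isUnit_one_sub_self_of_mem_nonunits x hxu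
  obtain ⟨⟨a, b⟩, hv⟩ := v
  by_cases hb0 : b = 0
  · subst hb0
    have ha : a ≠ 0 := by rintro rfl; exact hv.1 rfl
    refine ⟨⟨(1, x), mk_mem_zdvSet_prod_of_mul_eq_zero one_ne_zero ht0 hxt⟩,
      ⟨(1, t), mk_mem_zdvSet_prod_of_mul_eq_zero one_ne_zero hx0 (by rw [mul_comm, hxt])⟩,
      ?_, ?_, ?_, ?_, ?_⟩ <;> simp [zeroDivisorGraph_adj, hxne, hx0, ht0, ha]
  by_cases hbu : IsUnit b
  · have hxb : x ≠ b := fun h => hxu (h ▸ hbu)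
    have htb : t ≠ b := fun h => htu (h ▸ hbu)
    refine ⟨⟨(0, x), zero_mk_mem_zdvSet_prod hx0⟩, ⟨(0, t), zero_mk_mem_zdvSet_prod ht0⟩,
      ?_, ?_, ?_, ?_, ?_⟩ <;>
      simp [zeroDivisorGraph_adj, hxne, hx0, ht0, hxb, htb, hbu.mul_right_eq_zero]
  · have h1b : 1 ≠ b := fun h => hbu (h ▸ isUnit_one)
    have h1xb : 1 - x ≠ b := fun h => hbu (h ▸ h1x)
    have h11x : (1 : R₂) ≠ 1 - x := by simpa [eq_sub_iff_add_eq] using hx0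
    refine ⟨⟨(0, 1), zero_mk_mem_zdvSet_prod one_ne_zero⟩,
      ⟨(0, 1 - x), zero_mk_mem_zdvSet_prod h1x.ne_zero⟩, ?_, ?_, ?_, ?_, ?_⟩ <;>
      simp [zeroDivisorGraph_adj, hb0, h1b, h1xb, h11x, h1x.mul_left_eq_zero]

end Prod

theorem stmt_4 (R₁ R₂ : Type*) [CommRing R₁] [CommRing R₂]
    [Nontrivial R₁] [Finite R₂] [IsLocalRing R₂]
    (h₁ : (zdvSet R₁).Subsingleton)
    (h₂ : ∃ x : R₂, IsLocalRing.maximalIdeal R₂ = Ideal.span {x} ∧ x ^ 2 ≠ 0) :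
    romanDominationNumber (zeroDivisorGraph (R₁ × R₂)) = 4 := by
  obtain ⟨z, hz0, hz⟩ := exists_ne_zero_mul_eq_zero_of_zdvSet_subsingleton h₁
  obtain ⟨t, ht0, ht⟩ := IsLocalRing.exists_ne_zero_mul_eq_zero_of_mem_maximalIdeal R₂
  obtain ⟨x, hmx, hx2⟩ := h₂
  have hx : x ∈ IsLocalRing.maximalIdeal R₂ := hmx ▸ Ideal.mem_span_singleton_self x
  obtain ⟨D, hDcard, hD⟩ := exists_dominating_pair_zeroDivisorGraph_prod hz0 hz ht0 ht
  obtain ⟨f₀, hf₀, hfin₀, hw₀⟩ := exists_isRomanDominating_finsum_eq_two_mul_card D hD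
  refine IsLeast.csInf_eq ⟨⟨f₀, hf₀, hfin₀, by rw [← hw₀, hDcard]⟩, ?_⟩
  rintro w ⟨f, hf, hfin, rfl⟩
  have hedge : (zeroDivisorGraph (R₁ × R₂)).Adj ⟨(1, 0), mk_zero_mem_zdvSet_prod one_ne_zero⟩
      ⟨(0, 1), zero_mk_mem_zdvSet_prod one_ne_zero⟩ := by
    simp [zeroDivisorGraph_adj]
  exact hf.four_le_finsum hfin ⟨_, _, hedge⟩
    (zeroDivisorGraph_prod_exists_two_not_adj hx hx2 ht0 ht)
end

section
/- Let R be a commutative ring with identity possessing at least one nonzero zero-divisor, such that the set Z(R) of zero-divisors of R is an ideal of R and the quotient R/Z(R) is finite with cardinality α. Then 3 ≤ γ_R(T(Γ(R))) ≤ 2α. -/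
/-- The total graph `T(Γ(R))`: vertices are all elements of `R`, with distinct
`x`, `y` adjacent iff `x + y` is a zero-divisor of `R`. -/
def totalGraph (R : Type*) [CommRing R] : SimpleGraph R where
  Adj x y := x ≠ y ∧ ∃ w, w ≠ 0 ∧ (x + y) * w = 0
  symm := by
    constructor
    rintro x y ⟨hne, w, hw, hmul⟩
    exact ⟨hne.symm, w, hw, by rwa [add_comm]⟩
  loopless := by constructor; rintro x ⟨hne, _⟩; exact hne rfl

open Finset

theorem Finset.sum_le_finsum {α M : Type*} [AddCommMonoid M] [PartialOrder M]
    [IsOrderedAddMonoid M] {g : α → M} (hg : (Function.support g).Finite) (hg0 : ∀ i, 0 ≤ g i)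
    (s : Finset α) : ∑ i ∈ s, g i ≤ ∑ᶠ i, g i := by
  classical
  rw [finsum_eq_sum_of_support_subset g (s := s ∪ hg.toFinset) (by simp)]
  exact sum_le_sum_of_subset_of_nonneg subset_union_left fun i _ _ => hg0 i

section RomanDomination

variable {V : Type*} {G : SimpleGraph V}

theorem romanDominationNumber_le {f : V → Fin 3} (hf : IsRomanDominating G f)
    (hfin : {v | f v ≠ 0}.Finite) : romanDominationNumber G ≤ ∑ᶠ v, (f v : ℕ) :=
  csInf_le (OrderBot.bddBelow _) ⟨f, hf, hfin, rfl⟩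

theorem le_romanDominationNumber {n : ℕ}
    (hex : ∃ f : V → Fin 3, IsRomanDominating G f ∧ {v | f v ≠ 0}.Finite)
    (h : ∀ f : V → Fin 3, IsRomanDominating G f → {v | f v ≠ 0}.Finite →
      n ≤ ∑ᶠ v, (f v : ℕ)) :
    n ≤ romanDominationNumber G := by
  obtain ⟨f, hf, hfin⟩ := hex
  refine le_csInf ⟨_, f, hf, hfin, rfl⟩ ?_
  rintro _ ⟨g, hg, hgfin, rfl⟩
  exact h g hg hgfin

theorem exists_isRomanDominating_weight_eq_two_mul_card {S : Finset V}
    (hS : ∀ u ∉ S, ∃ v ∈ S, G.Adj u v) :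
    ∃ f : V → Fin 3, IsRomanDominating G f ∧ {v | f v ≠ 0}.Finite ∧
      ∑ᶠ v, (f v : ℕ) = 2 * #S := by
  classical
  refine ⟨fun v => if v ∈ S then 2 else 0, fun u hu => ?_, ?_, ?_⟩
  · have huS : u ∉ S := fun h => by simp [h] at hu
    obtain ⟨v, hv, huv⟩ := hS u huS
    exact ⟨v, huv, if_pos hv⟩
  · refine S.finite_toSet.subset fun v hv => ?_
    by_contra h
    exact hv (if_neg h)
  · have hval : ∀ v, ((if v ∈ S then 2 else 0 : Fin 3) : ℕ) = if v ∈ S then 2 else 0 :=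
      fun v => by split_ifs <;> rfl
    simp_rw [hval]
    rw [finsum_eq_sum_of_support_subset _ (s := S) (by simp), sum_ite_mem, inter_self,
      sum_const, smul_eq_mul, mul_comm]

theorem romanDominationNumber_le_two_mul_card {S : Finset V}
    (hS : ∀ u ∉ S, ∃ v ∈ S, G.Adj u v) : romanDominationNumber G ≤ 2 * #S := by
  obtain ⟨f, hf, hfin, hweight⟩ := exists_isRomanDominating_weight_eq_two_mul_card hS
  exact hweight ▸ romanDominationNumber_le hf hfin

theorem three_le_romanDominationNumber (hthree : ∃ a b c : V, a ≠ b ∧ a ≠ c ∧ b ≠ c)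
    (hnodom : ∀ a, ∃ u, u ≠ a ∧ ¬G.Adj u a)
    (hex : ∃ f : V → Fin 3, IsRomanDominating G f ∧ {v | f v ≠ 0}.Finite) :
    3 ≤ romanDominationNumber G := by
  classical
  refine le_romanDominationNumber hex fun f hf hfin => ?_
  have hsupp : (Function.support fun v => (f v : ℕ)).Finite := by
    refine hfin.subset fun v hv h => hv ?_
    simp [h]
  have hsum := fun s => Finset.sum_le_finsum hsupp (fun _ => Nat.zero_le _) s
  have hpos : ∀ v, f v ≠ 0 → 1 ≤ (f v : ℕ) := fun v hv =>
    Nat.one_le_iff_ne_zero.2 fun h => hv (Fin.ext h)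
  by_cases h2 : ∃ a, f a = 2
  · obtain ⟨a, ha⟩ := h2
    obtain ⟨u, hua, hnadj⟩ := hnodom a
    obtain ⟨v, hva, hv⟩ : ∃ v, v ≠ a ∧ f v ≠ 0 := by
      by_cases hu : f u = 0
      · obtain ⟨v, huv, hv⟩ := hf u hu
        exact ⟨v, by rintro rfl; exact hnadj huv, by simp [hv]⟩
      · exact ⟨u, hua, hu⟩
    have := hsum {a, v}
    rw [sum_pair hva.symm, ha, Fin.val_two] at this
    have := hpos v hv
    omega
  · simp only [not_exists] at h2
    have hall : ∀ v, f v ≠ 0 := fun v hv =>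
      let ⟨w, _, hw⟩ := hf v hv
      h2 w hw
    obtain ⟨a, b, c, hab, hac, hbc⟩ := hthree
    have := hsum {a, b, c}
    rw [sum_insert (by simp [hab, hac]), sum_pair hbc] at this
    have := hpos a (hall a)
    have := hpos b (hall b)
    have := hpos c (hall c)
    omega

end RomanDomination

section TotalGraph

variable {R : Type*} [CommRing R] {I : Ideal R}

theorem totalGraph_adj_iff (hI : ∀ z, z ∈ I ↔ ∃ w, w ≠ 0 ∧ z * w = 0) {x y : R} :
    (totalGraph R).Adj x y ↔ x ≠ y ∧ x + y ∈ I :=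
  and_congr_right fun _ => (hI _).symm

theorem Ideal.exists_finset_card_eq_forall_exists_add_mem (I : Ideal R) [Finite (R ⧸ I)] :
    ∃ S : Finset R, #S = Nat.card (R ⧸ I) ∧ ∀ u, ∃ v ∈ S, u + v ∈ I := by
  obtain ⟨s, hs⟩ := Ideal.Quotient.mk_surjective (I := I).hasRightInverse
  have hfin := Set.finite_range s
  refine ⟨hfin.toFinset, ?_, fun u => ⟨s (Ideal.Quotient.mk I (-u)), by simp, ?_⟩⟩
  · rw [← Nat.card_eq_card_finite_toFinset, Nat.card_range_of_injective hs.injective]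
  · have := (Ideal.Quotient.mk_eq_mk_iff_sub_mem _ _).1 (hs (Ideal.Quotient.mk I (-u)))
    rwa [sub_neg_eq_add, add_comm] at this

theorem Ideal.exists_ne_add_notMem (hI : I ≠ ⊤) {x : R} (hx : x ∈ I) (hx0 : x ≠ 0) (a : R) :
    ∃ u, u ≠ a ∧ u + a ∉ I := by
  have h1 : (1 : R) ∉ I := (Ideal.ne_top_iff_one I).1 hI
  by_cases ha : 1 - a = a
  · refine ⟨1 + x - a, fun h => hx0 ?_, fun h => h1 ?_⟩
    · linear_combination h - ha
    · simpa using I.sub_mem (show 1 + x - a + a ∈ I from h) hx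
  · exact ⟨1 - a, ha, by simpa using h1⟩

end TotalGraph

theorem stmt_15 (R : Type*) [CommRing R]
    (hzd : ∃ x : R, x ∈ zdvSet R)
    (I : Ideal R) (hI : ∀ z : R, z ∈ I ↔ ∃ w : R, w ≠ 0 ∧ z * w = 0)
    [Finite (R ⧸ I)] (α : ℕ) (hα : α = Nat.card (R ⧸ I)) :
    3 ≤ romanDominationNumber (totalGraph R) ∧
      romanDominationNumber (totalGraph R) ≤ 2 * α := by
  obtain ⟨x, hx0, y, hy0, hxy⟩ := hzd
  have hxI : x ∈ I := (hI x).2 ⟨y, hy0, hxy⟩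
  have h1I : (1 : R) ∉ I := fun h => by simpa using (hI 1).1 h
  have hItop : I ≠ ⊤ := (Ideal.ne_top_iff_one I).2 h1I
  obtain ⟨S, hScard, hS⟩ := I.exists_finset_card_eq_forall_exists_add_mem
  have hSdom : ∀ u ∉ S, ∃ v ∈ S, (totalGraph R).Adj u v := fun u hu =>
    let ⟨v, hv, huv⟩ := hS u
    ⟨v, hv, (totalGraph_adj_iff hI).2 ⟨fun h => hu (h ▸ hv), huv⟩⟩
  obtain ⟨f, hf, hfin, -⟩ := exists_isRomanDominating_weight_eq_two_mul_card hSdom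
  have hthree : ∃ a b c : R, a ≠ b ∧ a ≠ c ∧ b ≠ c :=
    ⟨0, 1, x, fun h => h1I (h ▸ I.zero_mem), hx0.symm, fun h => h1I (h ▸ hxI)⟩
  have hnodom : ∀ a : R, ∃ u, u ≠ a ∧ ¬(totalGraph R).Adj u a := fun a =>
    let ⟨u, hua, hu⟩ := Ideal.exists_ne_add_notMem hItop hxI hx0 a
    ⟨u, hua, fun h => hu ((totalGraph_adj_iff hI).1 h).2⟩
  exact ⟨three_le_romanDominationNumber hthree hnodom ⟨f, hf, hfin⟩,
    hα ▸ hScard ▸ romanDominationNumber_le_two_mul_card hSdom⟩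
end
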